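/- arXiv:math/9901076 — 2 statements merged into one kernel-verified Lean document; each statement's English description precedes it below -/
import Mathlib

section
/- Let E be a finite-dimensional complex inner product space and A a self-adjoint (Hermitian) linear endomorphism of E. Let x ∈ E be nonzero. Then, as t → +∞, the Rayleigh quotient ⟪exp(tA) x, A exp(tA) x⟫ / ‖exp(tA) x‖² converges to the largest eigenvalue λ of A such that the orthogonal projection of x onto the λ-eigenspace of A is nonzero. -/
/-!
Expand `x` in an orthonormal eigenbasis `(bᵢ, λᵢ)` of `A`. The flow `exp (t • A)` multiplies the
coordinate `cᵢ = ⟪bᵢ, x⟫` by `exp (t λᵢ)`, so the Rayleigh quotient is the average of the `λᵢ`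
with weights `exp (2 t λᵢ) ‖cᵢ‖²`. After dividing these weights by `exp (2 t μ)`, where `μ` is the
largest `λᵢ` with `cᵢ ≠ 0`, the weights with `λᵢ < μ` decay to `0` and the others are constant, so
the average tends to `μ`. Finally, `x` has a nonzero projection onto the `ν`-eigenspace exactly
when `cᵢ ≠ 0` for some `i` with `λᵢ = ν`.
-/

open Filter

theorem NormedSpace.exp_apply_of_apply_eq_smul {𝕜 E : Type*} [RCLike 𝕜] [NormedAddCommGroup E]
    [NormedSpace 𝕜 E] [CompleteSpace E] {B : E →L[𝕜] E} {v : E} {a : 𝕜} (h : B v = a • v) :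
    NormedSpace.exp B v = NormedSpace.exp a • v := by
  have hpow : ∀ n : ℕ, (B ^ n) v = a ^ n • v := by
    intro n
    induction n with
    | zero => simp
    | succ n ih => rw [pow_succ', mul_apply_eq_comp, ih, map_smul, h, smul_smul, ← pow_succ]
  have hB := (NormedSpace.exp_series_hasSum_exp' (𝕂 := 𝕜) B).mapL (ContinuousLinearMap.apply 𝕜 E v)
  have ha := (NormedSpace.exp_series_hasSum_exp' (𝕂 := 𝕜) a).smul_const v
  simp only [ContinuousLinearMap.apply_apply, smul_apply, hpow, smul_smul] at hB ha
  exact hB.unique ha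

theorem tendsto_sum_mul_exp_mul_div_sum_exp_mul {ι : Type*} [Fintype ι] {lam w : ι → ℝ}
    (hw : ∀ i, 0 ≤ w i) {i₀ : ι} (hi₀ : w i₀ ≠ 0) (hmax : ∀ i, w i ≠ 0 → lam i ≤ lam i₀) :
    Tendsto (fun t : ℝ => (∑ i, lam i * (Real.exp (t * lam i) * w i)) /
        ∑ i, Real.exp (t * lam i) * w i) atTop (nhds (lam i₀)) := by
  classical
  set μ := lam i₀
  set w' : ι → ℝ := fun i => if lam i = μ then w i else 0
  have hterm (i : ι) : Tendsto (fun t : ℝ => Real.exp (t * (lam i - μ)) * w i) atTop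
      (nhds (w' i)) := by
    by_cases hwi : w i = 0
    · simp [w', hwi]
    by_cases hli : lam i = μ
    · simp [w', hli]
    have hlt : lam i - μ < 0 := sub_neg.mpr ((hmax i hwi).lt_of_ne hli)
    simpa [w', hli] using
      (Real.tendsto_exp_atBot.comp (tendsto_id.atTop_mul_const_of_neg hlt)).mul_const (w i)
  have hsum_pos : 0 < ∑ i, w' i := by
    have : w' i₀ ≤ ∑ i, w' i :=
      Finset.single_le_sum (fun i _ => by by_cases h : lam i = μ <;> simp [w', h, hw i])
        (Finset.mem_univ i₀)
    have : w' i₀ = w i₀ := if_pos rfl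
    linarith [(hw i₀).lt_of_ne' hi₀]
  have hlim_eq : (∑ i, lam i * w' i) / ∑ i, w' i = μ := by
    rw [div_eq_iff hsum_pos.ne', Finset.mul_sum]
    exact Finset.sum_congr rfl fun i _ => by by_cases h : lam i = μ <;> simp [w', h]
  have hlim := (tendsto_finsetSum Finset.univ fun i _ => (hterm i).const_mul (lam i)).div
    (tendsto_finsetSum _ fun i _ => hterm i) hsum_pos.ne'
  rw [hlim_eq] at hlim
  refine hlim.congr fun t => ?_
  have hexp (i : ι) : Real.exp (t * lam i) = Real.exp (t * μ) * Real.exp (t * (lam i - μ)) := by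
    rw [← Real.exp_add]; ring_nf
  simp only [hexp, mul_assoc, mul_left_comm _ (Real.exp (t * μ)), ← Finset.mul_sum]
  rw [mul_div_mul_left _ _ (Real.exp_ne_zero _)]
  rfl

theorem OrthonormalBasis.exists_max_image_of_inner_ne_zero {ι 𝕜 E : Type*} [Fintype ι] [RCLike 𝕜]
    [NormedAddCommGroup E] [InnerProductSpace 𝕜 E] (b : OrthonormalBasis ι 𝕜 E) {x : E}
    (hx : x ≠ 0) (f : ι → ℝ) :
    ∃ i₀, inner 𝕜 (b i₀) x ≠ 0 ∧ ∀ i, inner 𝕜 (b i) x ≠ 0 → f i ≤ f i₀ := by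
  classical
  obtain ⟨i, hi⟩ : ∃ i, inner 𝕜 (b i) x ≠ 0 := by
    by_contra! h
    exact hx (by rw [← b.sum_repr' x]; simp [h])
  obtain ⟨i₀, hi₀, hmax⟩ := Finset.exists_max_image
    (Finset.univ.filter fun i => inner 𝕜 (b i) x ≠ 0) f ⟨i, by simpa using hi⟩
  exact ⟨i₀, by simpa using hi₀, fun i hi => hmax i (by simpa using hi)⟩

namespace LinearMap.IsSymmetric

section

variable {𝕜 E : Type*} [RCLike 𝕜] [NormedAddCommGroup E] [InnerProductSpace 𝕜 E]
  [FiniteDimensional 𝕜 E] {T : E →ₗ[𝕜] E} {n : ℕ} (hT : T.IsSymmetric)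
  (hn : Module.finrank 𝕜 E = n)

theorem inner_eigenvectorBasis_apply (i : Fin n) (y : E) :
    inner 𝕜 (hT.eigenvectorBasis hn i) (T y) =
      hT.eigenvalues hn i * inner 𝕜 (hT.eigenvectorBasis hn i) y := by
  rw [← hT, hT.apply_eigenvectorBasis, inner_smul_left, RCLike.conj_ofReal]

theorem re_inner_apply_self_eq_sum (y : E) :
    RCLike.re (inner 𝕜 y (T y)) =
      ∑ i, hT.eigenvalues hn i * ‖inner 𝕜 (hT.eigenvectorBasis hn i) y‖ ^ 2 := by
  rw [← (hT.eigenvectorBasis hn).sum_inner_mul_inner y (T y), map_sum]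
  refine Finset.sum_congr rfl fun i _ => ?_
  rw [hT.inner_eigenvectorBasis_apply, mul_left_comm, ← inner_conj_symm, RCLike.conj_mul]
  norm_cast

theorem mem_orthogonal_eigenspace_iff (ν : ℝ) (x : E) :
    x ∈ (Module.End.eigenspace T ν)ᗮ ↔
      ∀ i, hT.eigenvalues hn i = ν → inner 𝕜 (hT.eigenvectorBasis hn i) x = 0 := by
  refine ⟨fun hx i hi => ?_, fun hx v hv => ?_⟩
  · refine Submodule.inner_right_of_mem_orthogonal ?_ hx
    rw [Module.End.mem_eigenspace_iff, hT.apply_eigenvectorBasis, hi]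
  rw [← (hT.eigenvectorBasis hn).sum_inner_mul_inner v x]
  refine Finset.sum_eq_zero fun i _ => ?_
  by_cases hi : hT.eigenvalues hn i = ν
  · rw [hx i hi, mul_zero]
  · have hmem := (hT.hasEigenvector_eigenvectorBasis hn i).1
    exact mul_eq_zero_of_left
      (hT.orthogonalFamily_eigenspaces (by exact_mod_cast Ne.symm hi) ⟨v, hv⟩ ⟨_, hmem⟩) _

theorem orthogonalProjectionOnto_eigenspace_ne_zero_iff (ν : ℝ) (x : E) :
    (Module.End.eigenspace T ν).orthogonalProjectionOnto x ≠ 0 ↔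
      ∃ i, hT.eigenvalues hn i = ν ∧ inner 𝕜 (hT.eigenvectorBasis hn i) x ≠ 0 := by
  simp [Submodule.orthogonalProjectionOnto_eq_zero_iff, hT.mem_orthogonal_eigenspace_iff hn]

end

section

variable {E : Type*} [NormedAddCommGroup E] [InnerProductSpace ℂ E] [FiniteDimensional ℂ E]
  {A : E →L[ℂ] E} (hA : (A : E →ₗ[ℂ] E).IsSymmetric) {n : ℕ} (hn : Module.finrank ℂ E = n)

theorem inner_eigenvectorBasis_exp_smul_apply (t : ℝ) (x : E) (i : Fin n) :
    inner ℂ (hA.eigenvectorBasis hn i) (NormedSpace.exp (t • A) x) =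
      Real.exp (t * hA.eigenvalues hn i) * inner ℂ (hA.eigenvectorBasis hn i) x := by
  have hev : (t • A) (hA.eigenvectorBasis hn i) =
      ((t * hA.eigenvalues hn i : ℝ) : ℂ) • hA.eigenvectorBasis hn i := by
    have hAb : A (hA.eigenvectorBasis hn i) =
        (hA.eigenvalues hn i : ℂ) • hA.eigenvectorBasis hn i :=
      hA.apply_eigenvectorBasis hn i
    simp [hAb, mul_smul]
  have hexp : IsSelfAdjoint (NormedSpace.exp (t • A)) :=
    ((IsSelfAdjoint.all t).smul hA.isSelfAdjoint).exp
  rw [← hexp.adjoint_eq, ContinuousLinearMap.adjoint_inner_right,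
    NormedSpace.exp_apply_of_apply_eq_smul hev, inner_smul_left, ← Complex.exp_eq_exp_ℂ,
    ← Complex.ofReal_exp, Complex.conj_ofReal]

theorem rayleigh_exp_smul_apply (t : ℝ) (x : E) :
    (inner ℂ (NormedSpace.exp (t • A) x) (A (NormedSpace.exp (t • A) x))).re /
        ‖NormedSpace.exp (t • A) x‖ ^ 2 =
      (∑ i, hA.eigenvalues hn i * (Real.exp (2 * t * hA.eigenvalues hn i) *
          ‖inner ℂ (hA.eigenvectorBasis hn i) x‖ ^ 2)) /
        ∑ i, Real.exp (2 * t * hA.eigenvalues hn i) * ‖inner ℂ (hA.eigenvectorBasis hn i) x‖ ^ 2 := by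
  have hsq (i : Fin n) : ‖inner ℂ (hA.eigenvectorBasis hn i) (NormedSpace.exp (t • A) x)‖ ^ 2 =
      Real.exp (2 * t * hA.eigenvalues hn i) * ‖inner ℂ (hA.eigenvectorBasis hn i) x‖ ^ 2 := by
    rw [hA.inner_eigenvectorBasis_exp_smul_apply, norm_mul, mul_pow, Complex.norm_real,
      Real.norm_of_nonneg (Real.exp_pos _).le, ← Real.exp_nat_mul]
    ring_nf
  have hnum := hA.re_inner_apply_self_eq_sum hn (NormedSpace.exp (t • A) x)
  simp only [ContinuousLinearMap.coe_coe, RCLike.re_to_complex] at hnum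
  rw [hnum, ← (hA.eigenvectorBasis hn).sum_sq_norm_inner_right]
  simp only [hsq]

end

end LinearMap.IsSymmetric

/-- For a self-adjoint endomorphism `A` of a finite-dimensional complex inner
product space and `x ≠ 0`, the Rayleigh quotient `⟪exp(tA) x, A exp(tA) x⟫ / ‖exp(tA) x‖²`
converges, as `t → +∞`, to the largest eigenvalue `μ` of `A` such that the orthogonal
projection of `x` onto the `μ`-eigenspace is nonzero. -/
theorem tendsto_rayleigh_exp_smul_selfAdjoint
    {E : Type*} [NormedAddCommGroup E] [InnerProductSpace ℂ E] [FiniteDimensional ℂ E]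
    (A : E →L[ℂ] E) (hA : IsSelfAdjoint A) (x : E) (hx : x ≠ 0) :
    ∃ μ : ℝ,
      Submodule.orthogonalProjectionOnto (Module.End.eigenspace (A : E →ₗ[ℂ] E) (μ : ℂ)) x ≠ 0 ∧
      (∀ ν : ℝ,
        Submodule.orthogonalProjectionOnto (Module.End.eigenspace (A : E →ₗ[ℂ] E) (ν : ℂ)) x ≠ 0 → ν ≤ μ) ∧
      Tendsto (fun t : ℝ =>
          (inner ℂ (NormedSpace.exp (t • A) x) (A (NormedSpace.exp (t • A) x)) : ℂ).re /
            ‖NormedSpace.exp (t • A) x‖ ^ 2)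
        atTop (nhds μ) := by
  have hT := hA.isSymmetric
  obtain ⟨i₀, hi₀, hmax⟩ :=
    (hT.eigenvectorBasis rfl).exists_max_image_of_inner_ne_zero hx (hT.eigenvalues rfl)
  have hproj := hT.orthogonalProjectionOnto_eigenspace_ne_zero_iff rfl (x := x)
  refine ⟨hT.eigenvalues rfl i₀, (hproj _).2 ⟨i₀, rfl, hi₀⟩, fun ν hν => ?_, ?_⟩
  · obtain ⟨i, rfl, hi⟩ := (hproj ν).1 hν
    exact hmax i hi
  have hlim := tendsto_sum_mul_exp_mul_div_sum_exp_mul (lam := hT.eigenvalues rfl)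
    (w := fun i => ‖inner ℂ (hT.eigenvectorBasis rfl i) x‖ ^ 2) (fun _ => sq_nonneg _)
    (by simpa using hi₀) fun i hi => hmax i (by simpa using hi)
  exact (hlim.comp (tendsto_id.const_mul_atTop two_pos)).congr fun t =>
    (hT.rayleigh_exp_smul_apply rfl t x).symm
end

section
/- Let E be a finite-dimensional complex inner product space, A a self-adjoint (Hermitian) linear endomorphism of E, and x ∈ E a nonzero vector. Then the Rayleigh quotient function t ↦ ⟪exp(tA) x, A exp(tA) x⟫ / ‖exp(tA) x‖² is monotone nondecreasing on ℝ. -/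
/-!
Write `u t = exp(tA) x`, so that `u' = A u` and `u t ≠ 0` since `exp(tA)` is invertible. For
self-adjoint `A`, `(re ⟪u, A u⟫)' = 2 ‖A u‖²` and `(‖u‖²)' = 2 re ⟪u, A u⟫`, so the derivative of
the Rayleigh quotient has the sign of `‖u‖² ‖A u‖² - (re ⟪u, A u⟫)²`, which is nonnegative by
Cauchy–Schwarz.
-/

open NormedSpace RCLike

section RayleighQuotient

variable {𝕜 E : Type*} [RCLike 𝕜] [NormedAddCommGroup E] [InnerProductSpace 𝕜 E]

local notation "⟪" x ", " y "⟫" => inner 𝕜 x y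

theorem re_inner_sq_le_norm_sq_mul_norm_sq (x y : E) :
    re ⟪x, y⟫ ^ 2 ≤ ‖x‖ ^ 2 * ‖y‖ ^ 2 := by
  rw [← mul_pow, ← sq_abs]
  exact pow_le_pow_left₀ (abs_nonneg _) (abs_re_le_norm _ |>.trans (norm_inner_le_norm x y)) 2

variable [NormedSpace ℝ E]

theorem HasDerivAt.re_inner {f g : ℝ → E} {f' g' : E} {t : ℝ} (hf : HasDerivAt f f' t)
    (hg : HasDerivAt g g' t) :
    HasDerivAt (fun s => re ⟪f s, g s⟫) (re ⟪f t, g'⟫ + re ⟪f', g t⟫) t := by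
  have h := (reCLM (K := 𝕜)).hasFDerivAt.comp_hasDerivAt t (hf.inner 𝕜 hg)
  rw [reCLM_apply, map_add] at h
  exact h

theorem HasDerivAt.norm_sq_re_inner {f : ℝ → E} {f' : E} {t : ℝ} (hf : HasDerivAt f f' t) :
    HasDerivAt (fun s => ‖f s‖ ^ 2) (2 * re ⟪f t, f'⟫) t := by
  convert hf.re_inner (𝕜 := 𝕜) hf using 1
  · simp only [inner_self_eq_norm_sq]
  · rw [inner_re_symm (𝕜 := 𝕜) f', two_mul]

variable [IsScalarTower ℝ 𝕜 E] {A : E →L[𝕜] E} {u : ℝ → E}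

theorem hasDerivAt_re_inner_apply_of_isSymmetric (hA : (A : E →ₗ[𝕜] E).IsSymmetric) {t : ℝ}
    (hu : HasDerivAt u (A (u t)) t) :
    HasDerivAt (fun s => re ⟪u s, A (u s)⟫) (2 * ‖A (u t)‖ ^ 2) t := by
  have hAu : HasDerivAt (fun s => A (u s)) (A (A (u t))) t :=
    (A.restrictScalars ℝ).hasFDerivAt.comp_hasDerivAt t hu
  refine (hu.re_inner hAu).congr_deriv ?_
  have hsymm : ⟪A (u t), A (u t)⟫ = ⟪u t, A (A (u t))⟫ := hA (u t) (A (u t))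
  rw [← hsymm, inner_self_eq_norm_sq]
  ring

theorem monotone_re_inner_apply_div_norm_sq (hA : (A : E →ₗ[𝕜] E).IsSymmetric)
    (hu : ∀ t, HasDerivAt u (A (u t)) t) (hu₀ : ∀ t, u t ≠ 0) :
    Monotone (fun t => re ⟪u t, A (u t)⟫ / ‖u t‖ ^ 2) := by
  refine monotone_of_hasDerivAt_nonneg (fun t =>
    (hasDerivAt_re_inner_apply_of_isSymmetric hA (hu t)).div ((hu t).norm_sq_re_inner (𝕜 := 𝕜))
      (by simpa using hu₀ t)) fun t => div_nonneg ?_ (sq_nonneg _)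
  nlinarith [re_inner_sq_le_norm_sq_mul_norm_sq (𝕜 := 𝕜) (u t) (A (u t))]

end RayleighQuotient

section Exponential

variable {E : Type*} [NormedAddCommGroup E] [CompleteSpace E]

theorem exp_apply_ne_zero {𝕜 : Type*} [RCLike 𝕜] [NormedSpace 𝕜 E] (B : E →L[𝕜] E) {x : E}
    (hx : x ≠ 0) : exp B x ≠ 0 := by
  obtain ⟨U, hU⟩ := isUnit_exp_of_mem_ball (𝕂 := 𝕜) (x := B)
    ((expSeries_radius_eq_top 𝕜 (E →L[𝕜] E)).symm ▸ edist_lt_top _ _)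
  intro h
  apply hx
  calc x = (↑U⁻¹ * ↑U : E →L[𝕜] E) x := by simp
    _ = 0 := by simp [hU, h]

variable [NormedSpace ℂ E]

theorem hasDerivAt_exp_smul_apply (A : E →L[ℂ] E) (x : E) (t : ℝ) :
    HasDerivAt (fun s : ℝ => exp (s • A) x) (A (exp (t • A) x)) t :=
  ((ContinuousLinearMap.apply ℂ E x).restrictScalars ℝ).hasFDerivAt.comp_hasDerivAt t
    (hasDerivAt_exp_smul_const' A t)

end Exponential

/-- For a self-adjoint endomorphism `A` of a finite-dimensional complex inner
product space and a nonzero vector `x`, the Rayleigh quotient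
`t ↦ ⟪exp(tA) x, A exp(tA) x⟫ / ‖exp(tA) x‖²` is monotone nondecreasing on `ℝ`. -/
theorem monotone_rayleigh_exp_smul_selfAdjoint
    {E : Type*} [NormedAddCommGroup E] [InnerProductSpace ℂ E] [FiniteDimensional ℂ E]
    (A : E →L[ℂ] E) (hA : IsSelfAdjoint A) (x : E) (hx : x ≠ 0) :
    Monotone (fun t : ℝ =>
      (inner ℂ (NormedSpace.exp (t • A) x) (A (NormedSpace.exp (t • A) x)) : ℂ).re /
        ‖NormedSpace.exp (t • A) x‖ ^ 2) :=
  monotone_re_inner_apply_div_norm_sq hA.isSymmetric (hasDerivAt_exp_smul_apply A x)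
    fun _ => exp_apply_ne_zero _ hx
end
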